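/- arXiv:0803.3066 — 6 statements merged into one kernel-verified Lean document; each statement's English description precedes it below -/
import Mathlib

section
/- If the permutation π does not fix the last index, i.e. π(m) ≠ m, then ⟨w, P_π w⟩ = |⟨α, β⟩|², where w = α^{⊗(m−1)} ⊗ β. -/
/-- If the permutation `π` of the `m` registers does not fix the last index, then
`⟨w, P_π w⟩ = |⟨α, β⟩|²`, where `w = α^{⊗(m−1)} ⊗ β`. -/
theorem stmt_3 (m d : ℕ) (hm : 1 ≤ m) (hd : 1 ≤ d)
    (α β : Fin d → ℂ)
    (hα : ∑ i, star (α i) * α i = 1) (hβ : ∑ i, star (β i) * β i = 1)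
    (last : Fin m) (hlast : last = ⟨m - 1, by omega⟩)
    (w : (Fin m → Fin d) → ℂ)
    (hw : w = fun f => ∏ i, (if i = last then β (f i) else α (f i)))
    (π : Equiv.Perm (Fin m)) (hπ : π last ≠ last) :
    ∑ f, star (w f) * w (f ∘ π)
      = (Complex.normSq (∑ i, star (α i) * β i) : ℂ) := by
  subst hw
  set A : ℂ := ∑ i, star (α i) * β i with hA
  set G : Fin m → Fin d → ℂ := fun j x =>
    (if j = last then star (β x) else star (α x)) *
      (if j = π last then β x else α x) with hG
  have main : ∀ f : Fin m → Fin d,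
      star (∏ i, (if i = last then β (f i) else α (f i))) *
        (∏ i, (if i = last then β ((f ∘ π) i) else α ((f ∘ π) i)))
      = ∏ j, G j (f j) := by
    intro f
    have h2 : (∏ i, (if i = last then β ((f ∘ π) i) else α ((f ∘ π) i)))
        = ∏ j, (if j = π last then β (f j) else α (f j)) := by
      rw [← Equiv.prod_comp π (fun j => if j = π last then β (f j) else α (f j))]
      refine Finset.prod_congr rfl fun i _ => ?_
      by_cases h : i = last
      · subst h; simp [Function.comp]
      · rw [Function.comp_apply, if_neg h, if_neg]
        exact fun hc => h (π.injective hc)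
    rw [h2, star_prod, ← Finset.prod_mul_distrib]
    refine Finset.prod_congr rfl fun j _ => ?_
    simp [hG, apply_ite (star : ℂ → ℂ)]
  have factor : ∀ j : Fin m, (∑ x, G j x)
      = if j = last then star A else if j = π last then A else 1 := by
    intro j
    by_cases h1 : j = last
    · subst h1
      rw [if_pos rfl]
      have : ∑ x, G j x = ∑ x, star (β x) * α x := by
        refine Finset.sum_congr rfl fun x _ => ?_
        simp [hG, Ne.symm hπ]
      rw [this, hA, star_sum]
      refine Finset.sum_congr rfl fun x _ => ?_
      simp [mul_comm]
    · rw [if_neg h1]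
      by_cases h2 : j = π last
      · subst h2
        rw [if_pos rfl, hA]
        refine Finset.sum_congr rfl fun x _ => ?_
        simp [hG, h1]
      · rw [if_neg h2]
        have : ∑ x, G j x = ∑ x, star (α x) * α x := by
          refine Finset.sum_congr rfl fun x _ => ?_
          simp [hG, h1, h2]
        rw [this, hα]
  calc ∑ f, star (∏ i, (if i = last then β (f i) else α (f i))) *
        (∏ i, (if i = last then β ((f ∘ π) i) else α ((f ∘ π) i)))
      = ∑ f : Fin m → Fin d, ∏ j, G j (f j) := by
        exact Finset.sum_congr rfl fun f _ => main f
    _ = ∏ j, ∑ x, G j x := by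
        rw [Finset.prod_univ_sum, ← Fintype.piFinset_univ]
    _ = ∏ j, (if j = last then star A else if j = π last then A else 1) := by
        exact Finset.prod_congr rfl fun j _ => factor j
    _ = star A * A := by
        have : ∀ j : Fin m,
            (if j = last then star A else if j = π last then A else 1)
            = (if j = last then star A else 1) * (if j = π last then A else 1) := by
          intro j
          by_cases h1 : j = last
          · subst h1; simp [Ne.symm hπ]
          · simp [h1]
        rw [Finset.prod_congr rfl fun j _ => this j, Finset.prod_mul_distrib,
          Finset.prod_ite_eq' Finset.univ last (fun _ => star A),
          Finset.prod_ite_eq' Finset.univ (π last) (fun _ => A)]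
        simp
    _ = (Complex.normSq A : ℂ) := by
        rw [Complex.star_def, Complex.normSq_eq_conj_mul_self]
end

section
/- Averaging over only the m cyclic permutations gives the same expectation as the full symmetrizer: ⟨w, (1/m) Σ_{j=0}^{m−1} C^j w⟩ = |⟨α, β⟩|² + (1/m)(1 − |⟨α, β⟩|²), where w = α^{⊗(m−1)} ⊗ β. -/
/-!
Expanding in the product basis, `⟨w, P_τ w⟩` factorises over the registers into
`∏ᵢ ⟨vᵢ, v_{τ⁻¹ i}⟩`, where `v` is `β` in the last register and `α` elsewhere. For `τ = id`
this product is `1`. A nontrivial power of the cyclic shift has no fixed point, so it moves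
the `β` register onto an `α` register and some `α` register onto the `β` one: exactly two
factors differ from `⟨α, α⟩ = 1`, namely `⟨β, α⟩` and `⟨α, β⟩`, whose product is `|⟨α, β⟩|²`.
-/

open Finset

section ProductStates

variable {ι κ R : Type*} [Fintype ι] [DecidableEq ι] [Fintype κ] [CommSemiring R] [StarRing R]

theorem sum_star_prod_mul_prod_perm (g : ι → κ → R) (τ : Equiv.Perm ι) :
    ∑ f : ι → κ, star (∏ i, g i (f i)) * ∏ i, g i (f (τ i))
      = ∏ i, ∑ x, star (g i x) * g (τ⁻¹ i) x := by
  have hreindex (f : ι → κ) : ∏ i, g i (f (τ i)) = ∏ i, g (τ⁻¹ i) (f i) := by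
    rw [← Equiv.prod_comp τ fun i => g (τ⁻¹ i) (f i)]
    simp
  simp_rw [hreindex, star_prod, ← prod_mul_distrib]
  exact (Fintype.prod_sum fun i x => star (g i x) * g (τ⁻¹ i) x).symm

theorem star_sum_star_mul (u v : κ → R) :
    star (∑ x, star (u x) * v x) = ∑ x, star (v x) * u x := by
  simp [star_sum, star_mul]

end ProductStates

theorem prod_pairing_ite_perm {ι V M : Type*} [Fintype ι] [DecidableEq ι] [CommMonoid M]
    (φ : V → V → M) (a : ι) (b c : V) (hc : φ c c = 1) (τ : Equiv.Perm ι) (hτ : τ a ≠ a) :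
    ∏ i, φ (if i = a then b else c) (if τ i = a then b else c) = φ b c * φ c b := by
  have hτ' : τ.symm a ≠ a := fun h => hτ (τ.symm_apply_eq.mp h).symm
  rw [Fintype.prod_eq_mul a (τ.symm a) hτ'.symm]
  · simp [hτ, hτ']
  · rintro i ⟨hia, hiτ⟩
    have : τ i ≠ a := fun h => hiτ (τ.eq_symm_apply.mpr h)
    simp [hia, this, hc]

def IsCyclicShift {m : ℕ} (σ : Equiv.Perm (Fin m)) : Prop :=
  ∀ i : Fin m, (σ i : ℕ) = (i + 1) % m

namespace IsCyclicShift

variable {m : ℕ} {σ : Equiv.Perm (Fin m)}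

theorem val_pow_apply (hσ : IsCyclicShift σ) (j : ℕ) (i : Fin m) :
    ((σ ^ j) i : ℕ) = (i + j) % m := by
  induction j with
  | zero => simp [Nat.mod_eq_of_lt i.isLt]
  | succ j ih => rw [pow_succ', Equiv.Perm.mul_apply, hσ, ih, Nat.mod_add_mod, add_assoc]

theorem pow_apply_ne_self (hσ : IsCyclicShift σ) {j : ℕ} (hj0 : 0 < j) (hjm : j < m)
    (i : Fin m) : (σ ^ j) i ≠ i := by
  intro hfix
  have hmod : (i + j : ℕ) ≡ i + 0 [MOD m] := by
    rw [Nat.ModEq, ← hσ.val_pow_apply, hfix, add_zero, Nat.mod_eq_of_lt i.isLt]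
  have hdvd : m ∣ j := Nat.modEq_zero_iff_dvd.mp (Nat.ModEq.add_left_cancel' _ hmod)
  exact hj0.ne' (Nat.eq_zero_of_dvd_of_lt hdvd hjm)

end IsCyclicShift

/-- Averaging over only the `m` cyclic permutations gives the same expectation in
`w = α^{⊗(m−1)} ⊗ β` as the full symmetrizer:
`⟨w, (1/m) ∑_{j=0}^{m−1} C^j w⟩ = |⟨α,β⟩|² + (1/m)(1 − |⟨α,β⟩|²)`,
where `C = P_σ` and `σ(i) = i + 1 (mod m)`. -/
theorem stmt_5 (m d : ℕ) (hm : 1 ≤ m)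
    (α β : Fin d → ℂ)
    (hα : ∑ i, star (α i) * α i = 1) (hβ : ∑ i, star (β i) * β i = 1)
    (last : Fin m)
    (w : (Fin m → Fin d) → ℂ)
    (hw : w = fun f => ∏ i, (if i = last then β (f i) else α (f i)))
    (σ : Equiv.Perm (Fin m)) (hσ : ∀ i : Fin m, (σ i : ℕ) = ((i : ℕ) + 1) % m) :
    (m : ℂ)⁻¹ * ∑ j ∈ Finset.range m, ∑ f, star (w f) * w (f ∘ ⇑(σ ^ j))
      = (Complex.normSq (∑ i, star (α i) * β i) : ℂ)
        + (m : ℂ)⁻¹ * (1 - (Complex.normSq (∑ i, star (α i) * β i) : ℂ)) := by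
  obtain ⟨n, rfl⟩ : ∃ n, m = n + 1 := ⟨m - 1, by omega⟩
  set φ : (Fin d → ℂ) → (Fin d → ℂ) → ℂ := fun u v => ∑ x, star (u x) * v x
  set v : Fin (n + 1) → Fin d → ℂ := fun i => if i = last then β else α
  have hterm (j : ℕ) : ∑ f, star (w f) * w (f ∘ ⇑(σ ^ j)) = ∏ i, φ (v i) (v ((σ ^ j)⁻¹ i)) := by
    have hw' : w = fun f => ∏ i, v i (f i) := by simp only [hw, v, ite_apply]
    subst hw'
    exact sum_star_prod_mul_prod_perm v (σ ^ j)
  have hid : ∏ i, φ (v i) (v ((σ ^ 0)⁻¹ i)) = 1 :=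
    prod_eq_one fun i _ => by
      simp only [pow_zero, inv_one, Equiv.Perm.one_apply, v, φ]
      split_ifs
      exacts [hβ, hα]
  have hshift (j : ℕ) (hj : j < n) :
      ∏ i, φ (v i) (v ((σ ^ (j + 1))⁻¹ i)) = Complex.normSq (∑ i, star (α i) * β i) := by
    have hmove : (σ ^ (j + 1))⁻¹ last ≠ last := fun h =>
      IsCyclicShift.pow_apply_ne_self hσ j.succ_pos (by omega) last
        (Equiv.Perm.inv_eq_iff_eq.mp h).symm
    rw [prod_pairing_ite_perm φ last β α hα _ hmove, Complex.normSq_eq_conj_mul_self,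
      ← Complex.star_def, star_sum_star_mul]
  rw [sum_range_succ', hterm, hid]
  simp only [hterm, sum_congr rfl fun j hj => hshift j (mem_range.mp hj), sum_const, card_range,
    nsmul_eq_mul]
  push_cast
  field_simp
  ring
end

section
/- The two-outcome measurement {Π_sym, I − Π_sym} applied to α^{⊗(m−1)} ⊗ β simulates the measurement {|α⟩⟨α|, I − |α⟩⟨α|} applied to β up to error at most 1/m: for every unit vector β ∈ ℂ^d, |⟨w, Π_sym w⟩ − |⟨α, β⟩|²| ≤ 1/m, where w = α^{⊗(m−1)} ⊗ β. -/
/-!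
Expanding `w` as a product state, the overlap `⟨w, P_π w⟩` factors over the tensor slots into
inner products of single-site vectors: it is `1` when `π` fixes the slot carrying `β`, and
`|⟨α, β⟩|²` otherwise. Orbit–stabilizer says that a fraction `1/m` of all permutations fix that
slot, so `⟨w, Π_sym w⟩ = |⟨α, β⟩|² + (1 - |⟨α, β⟩|²) / m`, and Cauchy–Schwarz puts the error
term in `[0, 1/m]`.
-/

open Finset Matrix

section ProductState

variable {ι κ R : Type*} [Fintype ι] [DecidableEq ι] [Fintype κ] [CommSemiring R] [StarRing R]

lemma sum_star_prod_mul_prod_comp_perm (u : ι → κ → R) (π : Equiv.Perm ι) :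
    ∑ f : ι → κ, star (∏ i, u i (f i)) * ∏ i, u i ((f ∘ π) i) =
      ∏ j, star (u j) ⬝ᵥ u (π⁻¹ j) := by
  simp only [dotProduct, Fintype.prod_sum, Pi.star_apply]
  refine Fintype.sum_congr _ _ fun f => ?_
  rw [star_prod, ← Equiv.prod_comp π⁻¹ (fun i => u i ((f ∘ π) i)), ← prod_mul_distrib]
  simp

lemma prod_star_dotProduct_update_perm {u v : κ → R} (hu : star u ⬝ᵥ u = 1) (hv : star v ⬝ᵥ v = 1)
    (a : ι) (π : Equiv.Perm ι) :
    ∏ j, star (Function.update (fun _ => u) a v j) ⬝ᵥ Function.update (fun _ => u) a v (π⁻¹ j) =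
      if π a = a then 1 else star (star u ⬝ᵥ v) * (star u ⬝ᵥ v) := by
  simp only [Function.update_apply, Equiv.Perm.inv_eq_iff_eq]
  split_ifs with h
  · refine prod_eq_one fun j _ => ?_
    rw [h]
    split_ifs <;> assumption
  · have hfactor : ∀ j, star (if j = a then v else u) ⬝ᵥ (if j = π a then v else u) =
        (if j = a then star (star u ⬝ᵥ v) else 1) * (if j = π a then star u ⬝ᵥ v else 1) := by
      intro j
      by_cases hja : j = a
      · subst hja
        simp only [if_true, Ne.symm h, if_false, mul_one]
        exact star_dotProduct v u
      · by_cases hjb : j = π a <;> simp [hja, hjb, h, hu]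
    simp only [hfactor, prod_mul_distrib, prod_ite_eq', mem_univ, if_true]

end ProductState

lemma card_filter_perm_apply_eq_self_mul_card {α : Type*} [Fintype α] [DecidableEq α] (a : α) :
    #{π : Equiv.Perm α | π a = a} * Fintype.card α = (Fintype.card α).factorial := by
  have h := (MulAction.stabilizer (Equiv.Perm α) a).card_mul_index
  rw [MulAction.index_stabilizer_of_transitive, Nat.card_perm] at h
  simp only [Nat.card_eq_fintype_card] at h
  rw [← h, ← Fintype.card_subtype]
  rfl

lemma factorial_inv_mul_sum_perm_ite_apply_eq_self {α K : Type*} [Fintype α] [DecidableEq α]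
    [Field K] [CharZero K] (a : α) (t : K) :
    ((Fintype.card α).factorial : K)⁻¹ * ∑ π : Equiv.Perm α, (if π a = a then 1 else t) =
      t + (1 - t) / Fintype.card α := by
  have hcount := card_filter_perm_apply_eq_self_mul_card a
  have hcard : (Fintype.card α : K) ≠ 0 := Nat.cast_ne_zero.2 (Fintype.card_pos_iff.2 ⟨a⟩).ne'
  have hfix : (#{π : Equiv.Perm α | π a = a} : K) ≠ 0 := by
    refine Nat.cast_ne_zero.2 fun h => (Fintype.card α).factorial_ne_zero ?_
    rw [← hcount, h, zero_mul]
  have hsplit : ∀ π : Equiv.Perm α,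
      (if π a = a then 1 else t) = t + (if π a = a then 1 else 0) * (1 - t) := by
    intro π
    split_ifs <;> ring
  simp only [hsplit, sum_add_distrib, ← sum_mul, sum_boole, sum_const, card_univ,
    Fintype.card_perm, nsmul_eq_mul]
  rw [← hcount]
  push_cast
  field_simp

lemma normSq_star_dotProduct_le_one {ι : Type*} [Fintype ι] {u v : ι → ℂ}
    (hu : star u ⬝ᵥ u = 1) (hv : star v ⬝ᵥ v = 1) : Complex.normSq (star u ⬝ᵥ v) ≤ 1 := by
  have h := inner_mul_inner_self_le (𝕜 := ℂ) (WithLp.toLp 2 u) (WithLp.toLp 2 v)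
  simp only [EuclideanSpace.inner_toLp_toLp, dotProduct_comm _ (star _), hu, hv, RCLike.one_re,
    mul_one] at h
  rwa [star_dotProduct, norm_star, ← sq, ← Complex.normSq_eq_norm_sq, star_dotProduct,
    Complex.star_def, Complex.normSq_conj] at h

/-- The two-outcome measurement `{Π_sym, I − Π_sym}` applied to `α^{⊗(m−1)} ⊗ β`
simulates the measurement `{|α⟩⟨α|, I − |α⟩⟨α|}` on `β` up to error at most `1/m`:
for every unit vector `β`, `|⟨w, Π_sym w⟩ − |⟨α,β⟩|²| ≤ 1/m`. -/
theorem stmt_6 (m d : ℕ)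
    (α : Fin d → ℂ) (hα : ∑ i, star (α i) * α i = 1)
    (last : Fin m) :
    ∀ β : Fin d → ℂ, (∑ i, star (β i) * β i = 1) →
      ∀ w : (Fin m → Fin d) → ℂ,
        w = (fun f => ∏ i, (if i = last then β (f i) else α (f i))) →
        ‖((m.factorial : ℂ)⁻¹
                * (∑ π : Equiv.Perm (Fin m), ∑ f, star (w f) * w (f ∘ π))
              - (Complex.normSq (∑ i, star (α i) * β i) : ℂ))‖
          ≤ (m : ℝ)⁻¹ := by
  intro β hβ w hw
  set c := ∑ i, star (α i) * β i
  have hw_prod : ∀ f, w f = ∏ i, Function.update (fun _ => α) last β i (f i) := by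
    simp only [hw, Function.update_apply, ite_apply, implies_true]
  have hoverlap : ∀ π : Equiv.Perm (Fin m), ∑ f, star (w f) * w (f ∘ π) =
      if π last = last then 1 else (Complex.normSq c : ℂ) := by
    intro π
    simp only [hw_prod]
    rw [sum_star_prod_mul_prod_comp_perm, prod_star_dotProduct_update_perm hα hβ,
      Complex.normSq_eq_conj_mul_self]
    rfl
  have haverage := factorial_inv_mul_sum_perm_ite_apply_eq_self last (Complex.normSq c : ℂ)
  rw [Fintype.card_fin] at haverage
  simp only [hoverlap, haverage, add_sub_cancel_left, norm_div, Complex.norm_natCast]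
  have hc_le : Complex.normSq c ≤ 1 := normSq_star_dotProduct_le_one hα hβ
  rw [← Complex.ofReal_one, ← Complex.ofReal_sub, Complex.norm_real,
    Real.norm_of_nonneg (sub_nonneg.2 hc_le), div_eq_mul_inv]
  exact mul_le_of_le_one_left (by positivity) (by linarith [Complex.normSq_nonneg c])
end

section
/- The output of the nonlocal state identification protocol decomposes as ideal part plus error: (Y† ⊗ I_C) (I ⊗ M) (Y ⊗ I_C) ψ₀ = cor + err, where ψ₀ = √p a₀ ⊗ α^{⊗m} ⊗ s ⊗ |0⟩ + √(1−p) a₁ ⊗ v₀ ⊗ s ⊗ |0⟩ is the initial state (incoming state with the m−1 catalyst copies of α attached, control register in state s, answer qubit in |0⟩). -/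
/-!
Since `M = I ⊗ X + |s⟩⟨s| ⊗ (I − X)`, it sends `x ⊗ |0⟩` to `x ⊗ |1⟩ + (|s⟩⟨s| x) ⊗ (|0⟩ − |1⟩)`.
Conjugating by the controlled shift `Y` replaces the catalyst register in control branch `j'`
by its cyclic shift by `j' − j`. The branch `α^{⊗m}` is shift invariant, hence a multiple of `s`
in the control register: `|s⟩⟨s|` fixes it and its answer stays `|0⟩`. The branch `v₀` becomes
`v_{j'−j}`: its `|1⟩` part is shifted back by `Y†` to `v₀ ⊗ s ⊗ |1⟩`, and its projection onto
`s`, the average of the `v_k`, carries the answer `|0⟩ − |1⟩ = √2 |−⟩` and is the error term.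
-/

open Finset

section CyclicShift

variable {G : Type*} [AddGroup G]

def controlledShift {X B E : Type*} (ψ : (G → X) × G × B → E) : (G → X) × G × B → E :=
  fun q => ψ (fun k => q.1 (k + q.2.1), q.2.1, q.2.2)

def controlledShiftInv {X B E : Type*} (ψ : (G → X) × G × B → E) : (G → X) × G × B → E :=
  fun q => ψ (fun k => q.1 (k - q.2.1), q.2.1, q.2.2)

variable [Fintype G] {M : Type*} [CommMonoid M]

theorem prod_comp_add_right (x : G → M) (t : G) : ∏ i, x (i + t) = ∏ i, x i :=
  Equiv.prod_comp (Equiv.addRight t) x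

theorem prod_ite_eq_comp_add_right [DecidableEq G] (x y : G → M) (k t : G) :
    ∏ i, (if i = k then x (i + t) else y (i + t)) = ∏ i, if i = k + t then x i else y i :=
  Fintype.prod_equiv (Equiv.addRight t) _ _ fun i => by
    simp only [Equiv.coe_addRight, add_left_inj]

end CyclicShift

section CoherentMeasurement

variable {ι X B E : Type*} [Fintype ι] [AddCommGroup E] [Module ℂ E]

def coherentMeasurement (s : ι → ℂ) (flip : B → B) (ψ : X × ι × B → E) : X × ι × B → E :=
  fun q => ψ (q.1, q.2.1, flip q.2.2)
    + s q.2.1 • ∑ j', star (s j') • (ψ (q.1, j', q.2.2) - ψ (q.1, j', flip q.2.2))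

theorem coherentMeasurement_apply_of_eq_smul {c : ℂ} (hc : c * star c * Fintype.card ι = 1)
    (flip : B → B) (k : B → ℂ) (y z : E) (w : ι → ℂ) {ψ : X × ι × B → E} {g : X}
    (hψ : ∀ j' b', ψ (g, j', b') = k b' • (c • y + w j' • z)) (j : ι) (b : B) :
    coherentMeasurement (fun _ => c) flip ψ (g, j, b)
      = (k b * c) • y + (k (flip b) * w j + (k b - k (flip b)) * (c * star c * ∑ j', w j')) • z := by
  simp only [coherentMeasurement, hψ, ← sub_smul]
  simp only [smul_add, sum_add_distrib, sum_const, card_univ, ← sum_smul, smul_smul, ← mul_sum]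
  match_scalars
  · linear_combination (k b - k (flip b)) * c * hc
  · ring

end CoherentMeasurement

theorem inv_ofReal_sqrt_mul_star_mul_natCast {n : ℕ} (hn : n ≠ 0) :
    (Real.sqrt n : ℂ)⁻¹ * star (Real.sqrt n : ℂ)⁻¹ * n = 1 := by
  have hn' : (n : ℂ) ≠ 0 := Nat.cast_ne_zero.mpr hn
  rw [star_inv₀, Complex.star_def, Complex.conj_ofReal, ← mul_inv, ← Complex.ofReal_mul,
    Real.mul_self_sqrt (Nat.cast_nonneg n)]
  push_cast
  field_simp

/-- The total space `R ⊗ (ℂ^d)^{⊗m} ⊗ ℂ^m ⊗ ℂ²` is modelled as functions from the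
index set `(Fin m → Fin d) × Fin m × Fin 2` to the abstract space `R`. -/
theorem stmt_7 (m d : ℕ) (hm : 1 ≤ m)
    (R : Type*) [NormedAddCommGroup R] [InnerProductSpace ℂ R]
    (a₀ a₁ : R)
    (p : ℝ)
    (α αp : Fin d → ℂ)
    (s : Fin m → ℂ) (hs : s = fun _ => (Real.sqrt m : ℂ)⁻¹)
    (ket0 ket1 minus : Fin 2 → ℂ)
    (hket0 : ket0 = fun b => if b = 0 then 1 else 0)
    (hket1 : ket1 = fun b => if b = 1 then 1 else 0)
    (hminus : minus = fun b => (ket0 b - ket1 b) * (Real.sqrt 2 : ℂ)⁻¹)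
    (αm : (Fin m → Fin d) → ℂ) (hαm : αm = fun f => ∏ i, α (f i))
    (v : Fin m → (Fin m → Fin d) → ℂ)
    (hv : v = fun k f => ∏ i, (if i = k then αp (f i) else α (f i)))
    (flip : Fin 2 → Fin 2) (hflip : flip = fun b => if b = 0 then 1 else 0)
    (ψ₀ cor err : (Fin m → Fin d) × Fin m × Fin 2 → R)
    (hψ₀ : ψ₀ = fun q =>
        ((Real.sqrt p : ℂ) * αm q.1 * s q.2.1 * ket0 q.2.2) • a₀
        + ((Real.sqrt (1 - p) : ℂ) * v ⟨0, by omega⟩ q.1 * s q.2.1 * ket0 q.2.2) • a₁)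
    (hcor : cor = fun q =>
        ((Real.sqrt p : ℂ) * αm q.1 * s q.2.1 * ket0 q.2.2) • a₀
        + ((Real.sqrt (1 - p) : ℂ) * v ⟨0, by omega⟩ q.1 * s q.2.1 * ket1 q.2.2) • a₁)
    (herr : err = fun q =>
        (((Real.sqrt 2 / Real.sqrt m ^ 3) * Real.sqrt (1 - p) : ℂ)
            * (∑ j : Fin m, ∑ j' : Fin m,
                v (j - j') q.1 * (if q.2.1 = j' then 1 else 0))
            * minus q.2.2) • a₁)
    (Y Ydag M : ((Fin m → Fin d) × Fin m × Fin 2 → R) →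
        ((Fin m → Fin d) × Fin m × Fin 2 → R))
    (hY : Y = fun ψ q => ψ ((fun k => q.1 (k + q.2.1)), q.2.1, q.2.2))
    (hYdag : Ydag = fun ψ q => ψ ((fun k => q.1 (k - q.2.1)), q.2.1, q.2.2))
    (hM : M = fun ψ q => ψ (q.1, q.2.1, flip q.2.2)
        + s q.2.1 • ∑ j', star (s j') • (ψ (q.1, j', q.2.2) - ψ (q.1, j', flip q.2.2))) :
    Ydag (M (Y ψ₀)) = fun q => cor q + err q := by
  have : NeZero m := ⟨by omega⟩
  have hzero : (⟨0, by omega⟩ : Fin m) = 0 := rfl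
  subst hY hYdag hM
  change controlledShiftInv (coherentMeasurement s flip (controlledShift ψ₀)) = _
  funext ⟨f, j, b⟩
  set c : ℂ := (Real.sqrt m : ℂ)⁻¹ with hc_def
  have hc : c * star c * Fintype.card (Fin m) = 1 := by
    rw [Fintype.card_fin]; exact inv_ofReal_sqrt_mul_star_mul_natCast (NeZero.ne m)
  have hc_star : star c = c := by simp [hc_def]
  have hket_flip : ket0 (flip b) = ket1 b := by
    subst hket0 hket1 hflip; fin_cases b <;> rfl
  have hψ₀_shift (j' : Fin m) (b' : Fin 2) :
      controlledShift ψ₀ (fun k => f (k - j), j', b')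
        = ket0 b' • (c • ((Real.sqrt p * αm f : ℂ) • a₀)
          + ((Real.sqrt (1 - p) : ℂ) * v (j' - j) f * c) • a₁) := by
    simp only [controlledShift, hψ₀, hs, hαm, hv, hzero, add_sub_assoc]
    rw [prod_comp_add_right (fun i => α (f i)),
      prod_ite_eq_comp_add_right (fun i => αp (f i)) (fun i => α (f i)), zero_add]
    module
  subst hs
  rw [controlledShiftInv, coherentMeasurement_apply_of_eq_smul hc flip ket0 _ _ _ hψ₀_shift]
  dsimp only
  rw [hket_flip, sub_self, hcor, herr, hminus, hzero]
  dsimp only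
  simp only [mul_ite, mul_one, mul_zero, sum_ite_eq, mem_univ, if_true]
  match_scalars
  · ring
  · simp only [hc_star, ← sum_mul, ← mul_sum]
    rw [hc_def]
    field_simp
end

section
/- The error vector satisfies the norm bound ‖err‖ ≤ √(2(1−p)) / √m. -/
/-- The error vector of the nonlocal state identification protocol,
`err = (√2/m^{3/2}) √(1−p) ∑_{j,j'} a₁ ⊗ v_{(j−j') mod m} ⊗ |j'⟩ ⊗ |−⟩`,
satisfies the norm bound `‖err‖ ≤ √(2(1−p))/√m`.  The total space
`R ⊗ (ℂ^d)^{⊗m} ⊗ ℂ^m ⊗ ℂ²` is modelled as the `L²`-space of functions from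
`(Fin m → Fin d) × Fin m × Fin 2` to the abstract space `R`. -/
theorem stmt_8 (m d : ℕ) (hm : 1 ≤ m) (hd : 2 ≤ d)
    (R : Type*) [NormedAddCommGroup R] [InnerProductSpace ℂ R] [FiniteDimensional ℂ R]
    (a₀ a₁ : R) (ha₀ : ‖a₀‖ = 1) (ha₁ : ‖a₁‖ = 1)
    (p : ℝ) (hp0 : 0 ≤ p) (hp1 : p ≤ 1)
    (α αp : Fin d → ℂ)
    (hα : ∑ i, star (α i) * α i = 1) (hαp : ∑ i, star (αp i) * αp i = 1)
    (horth : ∑ i, star (α i) * αp i = 0)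
    (ket0 ket1 minus : Fin 2 → ℂ)
    (hket0 : ket0 = fun b => if b = 0 then 1 else 0)
    (hket1 : ket1 = fun b => if b = 1 then 1 else 0)
    (hminus : minus = fun b => (ket0 b - ket1 b) * (Real.sqrt 2 : ℂ)⁻¹)
    (v : Fin m → (Fin m → Fin d) → ℂ)
    (hv : v = fun k f => ∏ i, (if i = k then αp (f i) else α (f i)))
    (err : (Fin m → Fin d) × Fin m × Fin 2 → R)
    (herr : err = fun q =>
        (((Real.sqrt 2 / Real.sqrt m ^ 3) * Real.sqrt (1 - p) : ℂ)
            * (∑ j : Fin m, ∑ j' : Fin m,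
                v (j - j') q.1 * (if q.2.1 = j' then 1 else 0))
            * minus q.2.2) • a₁) :
    ‖(WithLp.equiv 2 ((Fin m → Fin d) × Fin m × Fin 2 → R)).symm err‖
      ≤ Real.sqrt (2 * (1 - p)) / Real.sqrt m := by
  classical
  haveI : NeZero m := ⟨Nat.one_le_iff_ne_zero.mp hm⟩
  have hp' : (0:ℝ) ≤ 1 - p := by linarith
  have hm0 : (0:ℝ) < m := by exact_mod_cast hm
  -- conjugate orthogonality
  have horth' : ∑ i, star (αp i) * α i = 0 := by
    have h := congrArg star horth
    simpa [star_sum, mul_comm] using h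
  -- orthonormality of the `v k`
  have hvon : ∀ k l : Fin m, ∑ f : Fin m → Fin d, star (v k f) * v l f
      = if k = l then 1 else 0 := by
    intro k l
    have h1 : ∀ f : Fin m → Fin d, star (v k f) * v l f
        = ∏ i, (star (if i = k then αp (f i) else α (f i)) *
            (if i = l then αp (f i) else α (f i))) := by
      intro f
      rw [hv]
      simp only [star_prod]
      rw [← Finset.prod_mul_distrib]
    rw [Finset.sum_congr rfl fun f _ => h1 f,
      ← Fintype.prod_sum fun (i : Fin m) (x : Fin d) =>
        star (if i = k then αp x else α x) * (if i = l then αp x else α x)]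
    by_cases hkl : k = l
    · subst hkl
      rw [if_pos rfl, Finset.prod_eq_one]
      intro i _
      by_cases hik : i = k
      · simpa [hik] using hαp
      · simpa [hik] using hα
    · rw [if_neg hkl]
      refine Finset.prod_eq_zero (Finset.mem_univ k) ?_
      simpa [hkl] using horth'
  -- the vector `w`
  set w : (Fin m → Fin d) → ℂ := fun f => ∑ k, v k f with hw
  have hwsum : ∑ f : Fin m → Fin d, ‖w f‖ ^ 2 = (m : ℝ) := by
    have h1 : ∑ f : Fin m → Fin d, star (w f) * w f = (m : ℂ) := by
      calc ∑ f : Fin m → Fin d, star (w f) * w f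
          = ∑ f : Fin m → Fin d, ∑ k, ∑ l, star (v k f) * v l f := by
            refine Finset.sum_congr rfl fun f _ => ?_
            simp only [hw]
            rw [star_sum, Finset.sum_mul]
            exact Finset.sum_congr rfl fun k _ => Finset.mul_sum _ _ _
        _ = ∑ k, ∑ f : Fin m → Fin d, ∑ l, star (v k f) * v l f := Finset.sum_comm
        _ = ∑ k, ∑ l, ∑ f : Fin m → Fin d, star (v k f) * v l f :=
            Finset.sum_congr rfl fun k _ => Finset.sum_comm
        _ = ∑ k : Fin m, ∑ l : Fin m, (if k = l then (1 : ℂ) else 0) :=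
            Finset.sum_congr rfl fun k _ => Finset.sum_congr rfl fun l _ => hvon k l
        _ = (m : ℂ) := by simp
    have h2 : ∑ f : Fin m → Fin d, star (w f) * w f
        = ((∑ f : Fin m → Fin d, ‖w f‖ ^ 2 : ℝ) : ℂ) := by
      push_cast
      refine Finset.sum_congr rfl fun f _ => ?_
      exact RCLike.conj_mul (w f)
    rw [h2] at h1
    exact_mod_cast h1
  -- collapsing the double sum
  have hS : ∀ (f : Fin m → Fin d) (j' : Fin m),
      (∑ j : Fin m, ∑ j'' : Fin m, v (j - j'') f * (if j' = j'' then 1 else 0))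
        = w f := by
    intro f j'
    have h1 : ∀ j : Fin m,
        ∑ j'' : Fin m, v (j - j'') f * (if j' = j'' then 1 else 0) = v (j - j') f := by
      intro j
      simp [mul_ite, Finset.sum_ite_eq]
    rw [Finset.sum_congr rfl fun j _ => h1 j]
    exact Fintype.sum_equiv (Equiv.subRight j') _ _ (fun j => rfl)
  -- squared norm of each entry
  have hc2 : ‖((Real.sqrt 2 / Real.sqrt m ^ 3) * Real.sqrt (1 - p) : ℂ)‖ ^ 2
      = 2 * (1 - p) / (m : ℝ) ^ 3 := by
    have h2 : Real.sqrt 2 ^ 2 = 2 := Real.sq_sqrt (by norm_num)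
    have hmm : Real.sqrt m ^ 2 = (m : ℝ) := Real.sq_sqrt hm0.le
    have hpp : Real.sqrt (1 - p) ^ 2 = 1 - p := Real.sq_sqrt hp'
    have hm3 : (Real.sqrt m ^ 3) ^ 2 = (m : ℝ) ^ 3 := by
      rw [← pow_mul, show 3 * 2 = 2 * 3 from rfl, pow_mul, hmm]
    have hnc : ‖((Real.sqrt 2 / Real.sqrt m ^ 3) * Real.sqrt (1 - p) : ℂ)‖
        = Real.sqrt 2 / Real.sqrt m ^ 3 * Real.sqrt (1 - p) := by
      simp [norm_mul, norm_div, norm_pow, Complex.norm_real,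
        abs_of_nonneg (Real.sqrt_nonneg _)]
    rw [hnc, mul_pow, div_pow, h2, hm3, hpp]
    ring
  have hterm : ∀ q : (Fin m → Fin d) × Fin m × Fin 2,
      ‖err q‖ ^ 2 = (2 * (1 - p) / (m : ℝ) ^ 3) * ‖w q.1‖ ^ 2 * ‖minus q.2.2‖ ^ 2 := by
    intro q
    rw [herr]
    simp only
    rw [hS q.1 q.2.1, norm_smul, ha₁, mul_one, norm_mul, norm_mul, mul_pow, mul_pow, hc2]
  -- the norm of `minus`
  have hmin : ∑ b : Fin 2, ‖minus b‖ ^ 2 = 1 := by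
    have hs2 : ‖((Real.sqrt 2 : ℝ) : ℂ)⁻¹‖ ^ 2 = 2⁻¹ := by
      rw [norm_inv, Complex.norm_real, Real.norm_eq_abs,
        abs_of_nonneg (Real.sqrt_nonneg _), inv_pow,
        Real.sq_sqrt (by norm_num : (0:ℝ) ≤ 2)]
    rw [Fin.sum_univ_two, hminus, hket0, hket1]
    norm_num [norm_mul, mul_pow, hs2]
  -- total squared norm
  have hsum : ∑ q : (Fin m → Fin d) × Fin m × Fin 2, ‖err q‖ ^ 2 = 2 * (1 - p) / m := by
    calc ∑ q : (Fin m → Fin d) × Fin m × Fin 2, ‖err q‖ ^ 2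
        = ∑ f : Fin m → Fin d, ∑ j' : Fin m, ∑ b : Fin 2,
            (2 * (1 - p) / (m : ℝ) ^ 3) * ‖w f‖ ^ 2 * ‖minus b‖ ^ 2 := by
          rw [Fintype.sum_prod_type]
          refine Finset.sum_congr rfl fun f _ => ?_
          rw [Fintype.sum_prod_type]
          refine Finset.sum_congr rfl fun j' _ => Finset.sum_congr rfl fun b _ => ?_
          exact hterm (f, j', b)
      _ = ∑ f : Fin m → Fin d, ∑ j' : Fin m,
            (2 * (1 - p) / (m : ℝ) ^ 3) * ‖w f‖ ^ 2 := by
          refine Finset.sum_congr rfl fun f _ => Finset.sum_congr rfl fun j' _ => ?_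
          rw [← Finset.mul_sum, hmin, mul_one]
      _ = ∑ f : Fin m → Fin d, (m : ℝ) * ((2 * (1 - p) / (m : ℝ) ^ 3) * ‖w f‖ ^ 2) := by
          refine Finset.sum_congr rfl fun f _ => ?_
          rw [Finset.sum_const, Finset.card_univ, Fintype.card_fin, nsmul_eq_mul]
      _ = (m : ℝ) * ((2 * (1 - p) / (m : ℝ) ^ 3) * (m : ℝ)) := by
          rw [← Finset.mul_sum, ← Finset.mul_sum, hwsum]
      _ = 2 * (1 - p) / m := by
          have hmne : (m : ℝ) ≠ 0 := hm0.ne'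
          field_simp
  -- conclude
  have hnorm : ‖(WithLp.equiv 2 ((Fin m → Fin d) × Fin m × Fin 2 → R)).symm err‖
      = Real.sqrt (∑ q : (Fin m → Fin d) × Fin m × Fin 2, ‖err q‖ ^ 2) := by
    rw [PiLp.norm_eq_of_L2]
    rfl
  rw [hnorm, hsum, Real.sqrt_div (by linarith : (0:ℝ) ≤ 2 * (1 - p))]
end

section
/- For unit vectors a, b in a finite-dimensional complex inner product space, the Hermitian operator |a⟩⟨a| − |b⟩⟨b| has trace norm 2√(1 − |⟨a, b⟩|²); precisely, the trace of the positive semidefinite square root of (|a⟩⟨a| − |b⟩⟨b|)² equals 2√(1 − |⟨a, b⟩|²). Equivalently, (1/2)‖ |a⟩⟨a| − |b⟩⟨b| ‖₁ = √(1 − |⟨a, b⟩|²). -/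
/-!
Write `c = ⟪a, b⟫` and `t = 1 - ‖c‖²`. The operator `T = |a⟩⟨a| - |b⟩⟨b|` is symmetric, and a
direct computation gives `T² = |a - c̄ b⟩⟨a| - |c a - b⟩⟨b|`, whence `T⁴ = t T²` and
`tr T² = 2t` (on `span {a, b}`, `T` has eigenvalues `±√t`). So `(√t)⁻¹ T²` is a positive square
root of `T²`; by uniqueness of positive square roots it is `S`, and `tr S = 2t / √t = 2√t`.
-/

open scoped InnerProductSpace ComplexConjugate

namespace LinearMap

variable {𝕜 E : Type*} [RCLike 𝕜] [NormedAddCommGroup E] [InnerProductSpace 𝕜 E]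

variable (𝕜) in
def rankOneDiff (a b : E) : E →ₗ[𝕜] E :=
  (innerₛₗ 𝕜 a).smulRight a - (innerₛₗ 𝕜 b).smulRight b

@[simp]
theorem rankOneDiff_apply (a b x : E) :
    rankOneDiff 𝕜 a b x = ⟪a, x⟫_𝕜 • a - ⟪b, x⟫_𝕜 • b := rfl

theorem isSymmetric_rankOneDiff (a b : E) : (rankOneDiff 𝕜 a b).IsSymmetric := by
  intro x y
  simp only [rankOneDiff_apply, inner_sub_left, inner_sub_right, inner_smul_left,
    inner_smul_right, inner_conj_symm]
  ring

theorem IsSymmetric.isPositive_mul_self {T : E →ₗ[𝕜] E} (hT : T.IsSymmetric) :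
    (T * T).IsPositive :=
  ⟨fun x y => by rw [Module.End.mul_apply, Module.End.mul_apply, hT, hT],
    fun x => by rw [Module.End.mul_apply, hT]; exact inner_self_nonneg⟩

variable {a b : E}

theorem rankOneDiff_mul_self (ha : ‖a‖ = 1) (hb : ‖b‖ = 1) :
    rankOneDiff 𝕜 a b * rankOneDiff 𝕜 a b =
      (innerₛₗ 𝕜 a).smulRight (a - conj ⟪a, b⟫_𝕜 • b)
        - (innerₛₗ 𝕜 b).smulRight (⟪a, b⟫_𝕜 • a - b) := by
  ext x
  simp only [Module.End.mul_apply, rankOneDiff_apply, sub_apply, smulRight_apply,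
    innerₛₗ_apply_apply, inner_sub_right, inner_smul_right, inner_self_eq_norm_sq_to_K, ha, hb,
    inner_conj_symm]
  module

theorem rankOneDiff_mul_self_mul_self (ha : ‖a‖ = 1) (hb : ‖b‖ = 1) :
    (rankOneDiff 𝕜 a b * rankOneDiff 𝕜 a b) * (rankOneDiff 𝕜 a b * rankOneDiff 𝕜 a b)
      = ((1 - ‖⟪a, b⟫_𝕜‖ ^ 2 : ℝ) : 𝕜) • (rankOneDiff 𝕜 a b * rankOneDiff 𝕜 a b) := by
  rw [rankOneDiff_mul_self ha hb]
  ext x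
  simp only [Module.End.mul_apply, sub_apply, smul_apply, smulRight_apply, innerₛₗ_apply_apply,
    inner_sub_right, inner_smul_right, inner_self_eq_norm_sq_to_K, ha, hb,
    ← inner_conj_symm b a, RCLike.mul_conj, RCLike.conj_mul]
  push_cast
  module

theorem trace_rankOneDiff_mul_self [FiniteDimensional 𝕜 E] (ha : ‖a‖ = 1) (hb : ‖b‖ = 1) :
    trace 𝕜 E (rankOneDiff 𝕜 a b * rankOneDiff 𝕜 a b)
      = ((2 * (1 - ‖⟪a, b⟫_𝕜‖ ^ 2) : ℝ) : 𝕜) := by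
  rw [rankOneDiff_mul_self ha hb, map_sub, trace_smulRight, trace_smulRight]
  simp only [innerₛₗ_apply_apply, inner_sub_right, inner_smul_right, inner_self_eq_norm_sq_to_K,
    ha, hb, ← inner_conj_symm b a, RCLike.mul_conj, RCLike.conj_mul]
  push_cast
  ring

section Complex

open scoped ComplexOrder

variable {H : Type*} [NormedAddCommGroup H] [InnerProductSpace ℂ H] [FiniteDimensional ℂ H]

theorem IsPositive.eq_of_mul_self_eq {S R : H →ₗ[ℂ] H} (hS : S.IsPositive) (hR : R.IsPositive)
    (h : S * S = R * R) : S = R := by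
  have hS' : 0 ≤ S.toContinuousLinearMap := (ContinuousLinearMap.nonneg_iff_isPositive _).mpr hS
  have hR' : 0 ≤ R.toContinuousLinearMap := (ContinuousLinearMap.nonneg_iff_isPositive _).mpr hR
  exact toContinuousLinearMap.injective <|
    (CFC.mul_self_eq_mul_self_iff _ _ hS' hR').mp (by ext x; simpa using congr($h x))

/- For `t = 0` the right-hand side is `0` by the convention `(√0)⁻¹ = 0`, which is correct since
then `A * A = 0` forces `A = 0`. -/
theorem IsPositive.eq_inv_sqrt_smul_of_mul_self_eq {S A : H →ₗ[ℂ] H} {t : ℝ}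
    (hS : S.IsPositive) (hA : A.IsPositive) (ht : 0 ≤ t) (hAA : A * A = (t : ℂ) • A)
    (hSA : S * S = A) : S = ((√t)⁻¹ : ℂ) • A := by
  refine hS.eq_of_mul_self_eq (hA.smul_of_nonneg ?_) ?_
  · exact inv_nonneg.mpr (Complex.zero_le_real.mpr (Real.sqrt_nonneg t))
  rcases ht.eq_or_lt with rfl | ht
  · have hA0 : A = 0 := hA.eq_of_mul_self_eq isPositive_zero (by simpa using hAA)
    simp [hSA, hA0]
  · rw [hSA, smul_mul_smul_comm, hAA, smul_smul, ← mul_inv, ← sq, ← Complex.ofReal_pow,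
      Real.sq_sqrt ht.le, inv_mul_cancel₀ (by exact_mod_cast ht.ne'), one_smul]

end Complex

end LinearMap

open LinearMap in
/-- For unit vectors `a, b` in a finite-dimensional complex inner product space,
the Hermitian operator `T = |a⟩⟨a| − |b⟩⟨b|` has trace norm `2√(1 − |⟨a,b⟩|²)`:
the trace of the positive semidefinite square root `S` of `T†T = T²` equals
`2√(1 − |⟨a,b⟩|²)`, i.e. `(1/2)‖ |a⟩⟨a| − |b⟩⟨b| ‖₁ = √(1 − |⟨a,b⟩|²)`. -/
theorem stmt_11 (H : Type*) [NormedAddCommGroup H] [InnerProductSpace ℂ H]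
    [FiniteDimensional ℂ H]
    (a b : H) (ha : ‖a‖ = 1) (hb : ‖b‖ = 1)
    (T : H →ₗ[ℂ] H)
    (hT : T = (innerₛₗ ℂ a).smulRight a - (innerₛₗ ℂ b).smulRight b)
    (S : H →ₗ[ℂ] H)
    (hSsym : S.IsSymmetric)
    (hSpos : ∀ x : H, 0 ≤ (inner ℂ x (S x) : ℂ).re)
    (hSsq : S * S = T * T) :
    LinearMap.trace ℂ H S
      = ((2 * Real.sqrt (1 - ‖(inner ℂ a b : ℂ)‖ ^ 2) : ℝ) : ℂ) := by
  change T = rankOneDiff ℂ a b at hT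
  subst hT
  have hS : S.IsPositive := ⟨hSsym, fun x => by rw [hSsym]; exact hSpos x⟩
  have ht : 0 ≤ 1 - ‖⟪a, b⟫_ℂ‖ ^ 2 := by
    have := norm_inner_le_norm (𝕜 := ℂ) a b
    rw [ha, hb, one_mul] at this
    nlinarith [norm_nonneg ⟪a, b⟫_ℂ]
  rw [hS.eq_inv_sqrt_smul_of_mul_self_eq (isSymmetric_rankOneDiff a b).isPositive_mul_self ht
    (rankOneDiff_mul_self_mul_self ha hb) hSsq, map_smul, trace_rankOneDiff_mul_self ha hb,
    smul_eq_mul, ← RCLike.ofReal_eq_complex_ofReal]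
  norm_cast
  rw [mul_left_comm, ← div_eq_inv_mul, Real.div_sqrt]
end
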